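/- Let C_s = Σ_{i=1}^{s} 1/i. For even s, if the s/2 - 1 false p-values are identically 0 and the |I| = s/2 + 1 true p-values are i.i.d. Uniform(0,1), then the probability that the stepup procedure with critical values (α/C_s)·(i/s) rejects at least one true hypothesis is at least 1 - (1 - α/(2C_s))^{s/2+1}, which tends to 1 as s → ∞. Hence the Benjamini–Yekutieli critical values do not control the FWER even under independence. -/

import Mathlib

open MeasureTheory Finset
open scoped Classical

/-- `orderStat p k` is the `k`-th smallest value (1-indexed) among `p 0, …, p (n-1)`. -/
noncomputable def orderStat {n : ℕ} (p : Fin n → ℝ) (k : ℕ) : ℝ :=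
  if h : k - 1 < n then p (Tuple.sort p ⟨k - 1, h⟩) else 0

/-- The number of rejections of the stepup procedure with critical values
`c 1 ≤ … ≤ c n` (1-indexed): the largest `j` with `p_(j) ≤ c j` (0 if none). -/
noncomputable def numReject {n : ℕ} (c : ℕ → ℝ) (p : Fin n → ℝ) : ℕ :=
  ((Finset.Icc 1 n).filter (fun j => orderStat p j ≤ c j)).sup id

/-- The indices rejected by the stepup procedure: those carrying the
`numReject c p` smallest p-values (via the sorting permutation). -/
noncomputable def rejectedSet {n : ℕ} (c : ℕ → ℝ) (p : Fin n → ℝ) : Finset (Fin n) :=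
  (Finset.univ.filter (fun j : Fin n => (j : ℕ) + 1 ≤ numReject c p)).image (Tuple.sort p)

/-- The `k`-th smallest (1-indexed) of the p-values with indices in `I`. -/
noncomputable def trueOrderStat {n : ℕ} (I : Finset (Fin n)) (p : Fin n → ℝ) (k : ℕ) : ℝ :=
  orderStat (fun j : Fin I.card => p (I.orderIsoOfFin rfl j).1) k

/-!
If the `s/2 - 1` false p-values vanish and one true p-value is at most `α/(2C_s)`, then `s/2`
p-values lie below the critical value `(α/C_s)·(s/2)/s = α/(2C_s)`, so the stepup procedure
rejects at least `s/2` hypotheses, more than there are false ones: some true hypothesis is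
rejected. For `s/2 + 1` independent uniform true p-values, one of them falls below `α/(2C_s)`
with probability exactly `1 - (1 - α/(2C_s))^{s/2+1}`. As `C_s ≤ 1 + log s`, the exponent
times `α/(2C_s)` tends to infinity, and `1 - x ≤ e^{-x}` sends the bound to `1`.
-/

open Filter Topology

section StepUp

variable {n : ℕ}

lemma orderStat_le_of_le_card_filter (p : Fin n → ℝ) {k : ℕ} (hk : 1 ≤ k) {t : ℝ}
    (hcard : k ≤ #{i | p i ≤ t}) : orderStat p k ≤ t := by
  have hkn : k - 1 < n := by
    have hle := card_filter_le (univ : Finset (Fin n)) (fun i => p i ≤ t)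
    rw [card_univ, Fintype.card_fin] at hle
    omega
  rw [orderStat, dif_pos hkn]
  by_contra! hgt
  set σ := Tuple.sort p
  have hsub : ({i | p i ≤ t} : Finset (Fin n)) ⊆ (Iio ⟨k - 1, hkn⟩).image σ := by
    intro i hi
    refine mem_image.2 ⟨σ.symm i, mem_Iio.2 ?_, σ.apply_symm_apply i⟩
    by_contra! hle
    have hmono : p (σ ⟨k - 1, hkn⟩) ≤ p i := by simpa [σ] using Tuple.monotone_sort p hle
    linarith [(mem_filter.1 hi).2]
  have hsub_card := card_le_card hsub
  rw [card_image_of_injective _ σ.injective, Fin.card_Iio, Fin.val_mk] at hsub_card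
  omega

lemma le_numReject (c : ℕ → ℝ) (p : Fin n → ℝ) {k : ℕ} (hk : k ∈ Icc 1 n)
    (h : orderStat p k ≤ c k) : k ≤ numReject c p :=
  le_sup (f := id) (mem_filter.2 ⟨hk, h⟩)

lemma numReject_le (c : ℕ → ℝ) (p : Fin n → ℝ) : numReject c p ≤ n :=
  Finset.sup_le fun _ hj => (mem_Icc.1 (mem_filter.1 hj).1).2

lemma card_rejectedSet (c : ℕ → ℝ) (p : Fin n → ℝ) : #(rejectedSet c p) = numReject c p := by
  rw [rejectedSet, card_image_of_injective _ (Tuple.sort p).injective]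
  simp only [Nat.add_one_le_iff]
  rw [Fin.card_filter_val_lt, min_eq_right (numReject_le c p)]

lemma rejectedSet_inter_nonempty (c : ℕ → ℝ) (q : Fin n → ℝ) {I : Finset (Fin n)} {i₀ : Fin n}
    (hi₀ : i₀ ∈ I) (hq : q i₀ ≤ c (#Iᶜ + 1)) (hfalse : ∀ i ∉ I, q i ≤ c (#Iᶜ + 1)) :
    (rejectedSet c q ∩ I).Nonempty := by
  set k := #Iᶜ + 1
  have hk : k ≤ #{i | q i ≤ c k} := by
    calc k = #(insert i₀ Iᶜ) := by rw [card_insert_of_notMem (by simpa)]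
      _ ≤ _ := card_le_card fun i hi => by
        rw [mem_filter]
        rcases mem_insert.1 hi with rfl | hi
        exacts [⟨mem_univ _, hq⟩, ⟨mem_univ _, hfalse i (mem_compl.1 hi)⟩]
  have hkn : k ≤ n :=
    hk.trans ((card_filter_le _ _).trans (card_univ.trans (Fintype.card_fin n)).le)
  have hrej : k ≤ #(rejectedSet c q) := card_rejectedSet c q ▸ le_numReject c q
    (mem_Icc.2 ⟨le_add_self, hkn⟩) (orderStat_le_of_le_card_filter q le_add_self hk)
  have hout : #(rejectedSet c q \ I) ≤ #Iᶜ :=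
    card_le_card fun x hx => mem_compl.2 (mem_sdiff.1 hx).2
  have hsplit := card_sdiff_add_card_inter (rejectedSet c q) I
  rw [← card_pos]
  omega

end StepUp

lemma measureReal_exists_le_of_iIndepFun_uniform {Ω ι : Type*} [MeasurableSpace Ω]
    {μ : Measure Ω} [IsProbabilityMeasure μ] [Fintype ι] {X : ι → Ω → ℝ}
    (hmeas : ∀ i, Measurable (X i)) (hindep : ProbabilityTheory.iIndepFun X μ)
    (hunif : ∀ i, μ.map (X i) = volume.restrict (Set.Icc 0 1)) {t : ℝ} (ht0 : 0 ≤ t)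
    (ht1 : t ≤ 1) :
    μ.real {ω | ∃ i, X i ω ≤ t} = 1 - (1 - t) ^ Fintype.card ι := by
  have hsurvive : ∀ i, μ (X i ⁻¹' Set.Ioi t) = ENNReal.ofReal (1 - t) := fun i => by
    rw [← Measure.map_apply (hmeas i) measurableSet_Ioi, hunif i,
      Measure.restrict_apply measurableSet_Ioi, ← Real.volume_Ioc]
    congr 1
    ext x
    simp only [Set.mem_inter_iff, Set.mem_Ioi, Set.mem_Icc, Set.mem_Ioc]
    exact ⟨fun h => ⟨h.1, h.2.2⟩, fun h => ⟨h.1, ht0.trans h.1.le, h.2⟩⟩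
  have hcompl : {ω | ∃ i, X i ω ≤ t}ᶜ = ⋂ i, X i ⁻¹' Set.Ioi t := by ext; simp
  have hmeasSet : MeasurableSet {ω | ∃ i, X i ω ≤ t} := by
    simpa only [Set.ofPred_exists] using
      MeasurableSet.iUnion fun i => measurableSet_le (hmeas i) measurable_const
  rw [← sub_sub_cancel 1 (μ.real _), ← probReal_compl_eq_one_sub hmeasSet, hcompl, measureReal_def,
    hindep.meas_iInter fun i => ⟨Set.Ioi t, measurableSet_Ioi, rfl⟩]
  simp [hsurvive, ENNReal.toReal_ofReal (sub_nonneg.2 ht1)]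

lemma sum_Icc_one_div_eq_harmonic (n : ℕ) : ∑ i ∈ Icc 1 n, (1 : ℝ) / i = harmonic n := by
  simp [harmonic_eq_sum_Icc, one_div]

lemma one_le_sum_Icc_one_div {n : ℕ} (hn : n ≠ 0) : 1 ≤ ∑ i ∈ Icc 1 n, (1 : ℝ) / i := by
  simpa using single_le_sum (f := fun i : ℕ => (1 : ℝ) / i) (fun i _ => by positivity)
    (mem_Icc.2 ⟨le_rfl, Nat.one_le_iff_ne_zero.2 hn⟩)

lemma tendsto_harmonic_atTop : Tendsto (fun n : ℕ => (harmonic n : ℝ)) atTop atTop :=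
  tendsto_atTop_mono log_add_one_le_harmonic
    (Real.tendsto_log_atTop.comp (tendsto_natCast_atTop_atTop.comp (tendsto_add_atTop_nat 1)))

lemma tendsto_natCast_div_harmonic_atTop :
    Tendsto (fun n : ℕ => (n : ℝ) / harmonic n) atTop atTop := by
  have hlog : Tendsto (fun x : ℝ => (1 + Real.log x) / x) atTop (𝓝 0) :=
    ((Asymptotics.isLittleO_const_id_atTop 1).add Real.isLittleO_log_id_atTop).tendsto_div_nhds_zero
  have hratio : Tendsto (fun n : ℕ => (harmonic n : ℝ) / n) atTop (𝓝[>] 0) := by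
    refine tendsto_nhdsWithin_iff.2 ⟨squeeze_zero (fun n => ?_) (fun n => ?_)
      (hlog.comp tendsto_natCast_atTop_atTop), ?_⟩
    · rw [← sum_Icc_one_div_eq_harmonic]
      positivity
    · exact div_le_div_of_nonneg_right (harmonic_le_one_add_log n) n.cast_nonneg
    · filter_upwards [eventually_ne_atTop 0] with n hn
      exact Set.mem_Ioi.2 <|
        div_pos (Rat.cast_pos.2 (harmonic_pos hn)) (Nat.cast_pos.2 (Nat.pos_of_ne_zero hn))
  simpa only [Pi.inv_def, inv_div] using hratio.inv_tendsto_nhdsGT_zero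

lemma tendsto_one_sub_pow_atTop_zero {t : ℕ → ℝ} {m : ℕ → ℕ} (ht : ∀ᶠ n in atTop, t n ≤ 1)
    (hmt : Tendsto (fun n => m n * t n) atTop atTop) :
    Tendsto (fun n => (1 - t n) ^ m n) atTop (𝓝 0) := by
  refine squeeze_zero' (ht.mono fun n hn => pow_nonneg (sub_nonneg.2 hn) _) (ht.mono fun n hn => ?_)
    (Real.tendsto_exp_atBot.comp (tendsto_neg_atTop_atBot.comp hmt))
  calc (1 - t n) ^ m n ≤ Real.exp (-t n) ^ m n :=
        pow_le_pow_left₀ (sub_nonneg.2 hn) (Real.one_sub_le_exp_neg _) _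
    _ = Real.exp (-(m n * t n)) := by rw [← Real.exp_nat_mul]; ring_nf

lemma tendsto_one_sub_one_sub_div_harmonic_pow {α : ℝ} (hα : 0 < α) :
    Tendsto (fun n : ℕ => 1 - (1 - α / (2 * ∑ i ∈ Icc 1 n, (1 : ℝ) / i)) ^ (n / 2 + 1))
      atTop (𝓝 1) := by
  simp_rw [sum_Icc_one_div_eq_harmonic]
  have hsmall : Tendsto (fun n : ℕ => α / (2 * harmonic n)) atTop (𝓝 0) :=
    tendsto_const_nhds.div_atTop (tendsto_harmonic_atTop.const_mul_atTop two_pos)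
  have hlarge :
      Tendsto (fun n : ℕ => ((n / 2 + 1 : ℕ) : ℝ) * (α / (2 * harmonic n))) atTop atTop := by
    refine tendsto_atTop_mono (fun n => ?_) (tendsto_natCast_div_harmonic_atTop.const_mul_atTop
      (by positivity : 0 < α / 4))
    have hhalf : (n : ℝ) / 2 ≤ ((n / 2 + 1 : ℕ) : ℝ) := by
      rw [div_le_iff₀ two_pos]
      exact_mod_cast (by omega : n ≤ (n / 2 + 1) * 2)
    have ht : 0 ≤ α / (2 * harmonic n) := by
      rw [← sum_Icc_one_div_eq_harmonic]
      positivity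
    calc α / 4 * (n / harmonic n) = (n : ℝ) / 2 * (α / (2 * harmonic n)) := by ring
      _ ≤ _ := mul_le_mul_of_nonneg_right hhalf ht
  simpa using (tendsto_one_sub_pow_atTop_zero
    (hsmall.eventually (eventually_le_nhds one_pos)) hlarge).const_sub 1

theorem stmt11_general {Ω : Type*} [MeasurableSpace Ω] (μ : Measure Ω) [IsProbabilityMeasure μ]
    {s : ℕ} (hs : Even s)
    (α : ℝ) (hα : α ∈ Set.Ioo (0 : ℝ) 1)
    (p : Fin s → Ω → ℝ) (hmeas : ∀ i, Measurable (p i))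
    (I : Finset (Fin s)) (hIcard : I.card = s / 2 + 1)
    (hfalse : ∀ i ∉ I, ∀ ω, p i ω = 0)
    (hindep : ProbabilityTheory.iIndepFun
      (fun i : {x // x ∈ I} => p i.1) μ)
    (hunif : ∀ i ∈ I, μ.map (p i) = volume.restrict (Set.Icc (0 : ℝ) 1)) :
    1 - (1 - α / (2 * ∑ i ∈ Finset.Icc 1 s, (1 : ℝ) / i)) ^ (s / 2 + 1) ≤
      (μ {ω | 1 ≤ (rejectedSet
          (fun j => α / (∑ i ∈ Finset.Icc 1 s, (1 : ℝ) / i) * ((j : ℝ) / s))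
          (fun i => p i ω) ∩ I).card}).toReal ∧
    Filter.Tendsto
      (fun n : ℕ => 1 - (1 - α / (2 * ∑ i ∈ Finset.Icc 1 n, (1 : ℝ) / i)) ^ (n / 2 + 1))
      Filter.atTop (nhds 1) := by
  refine ⟨?_, tendsto_one_sub_one_sub_div_harmonic_pow hα.1⟩
  set C := ∑ i ∈ Icc 1 s, (1 : ℝ) / i
  obtain ⟨m, rfl⟩ := hs
  have hm : 1 ≤ m := by
    have hI := I.card_le_univ
    rw [Fintype.card_fin] at hI
    omega
  have hC : 1 ≤ C := one_le_sum_Icc_one_div (by omega)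
  have ht0 : 0 ≤ α / (2 * C) := div_nonneg hα.1.le (by positivity)
  have ht1 : α / (2 * C) ≤ 1 := by
    rw [div_le_one (by positivity)]
    linarith [hα.2]
  have hcrit : α / C * (((#Iᶜ + 1 : ℕ) : ℝ) / ↑(m + m)) = α / (2 * C) := by
    rw [card_compl, Fintype.card_fin, hIcard, show m + m - ((m + m) / 2 + 1) + 1 = m by omega]
    push_cast
    field_simp
    ring
  calc 1 - (1 - α / (2 * C)) ^ ((m + m) / 2 + 1)
      = μ.real {ω | ∃ i : I, p i ω ≤ α / (2 * C)} := by
        rw [measureReal_exists_le_of_iIndepFun_uniform (X := fun i : I => p i) (fun i => hmeas i)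
          hindep (fun i => hunif i i.2) ht0 ht1, Fintype.card_coe, hIcard]
    _ ≤ _ := measureReal_mono fun ω ⟨i, hi⟩ => one_le_card.2 <|
        rejectedSet_inter_nonempty _ _ i.2 (hi.trans hcrit.ge)
          fun j hj => (hfalse j hj ω).trans_le (ht0.trans hcrit.ge)

/-- Remark 4.1: with `s` even, `s/2 - 1` false p-values identically `0` and the
`|I| = s/2 + 1` true p-values i.i.d. `U(0,1)`, the stepup procedure with the
Benjamini–Yekutieli critical values `(α/C_s)·(i/s)` rejects at least one true
hypothesis with probability at least `1 - (1 - α/(2·C_s))^{s/2+1}`, a bound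
which tends to `1` as `s → ∞`. -/
theorem stmt11 {Ω : Type*} [MeasurableSpace Ω] (μ : Measure Ω) [IsProbabilityMeasure μ]
    {s : ℕ} (hs : Even s) (hs0 : 0 < s)
    (α : ℝ) (hα : α ∈ Set.Ioo (0 : ℝ) 1)
    (p : Fin s → Ω → ℝ) (hmeas : ∀ i, Measurable (p i))
    (I : Finset (Fin s)) (hIcard : I.card = s / 2 + 1)
    (hfalse : ∀ i ∉ I, ∀ ω, p i ω = 0)
    (hindep : ProbabilityTheory.iIndepFun
      (fun i : {x // x ∈ I} => p i.1) μ)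
    (hunif : ∀ i ∈ I, μ.map (p i) = volume.restrict (Set.Icc (0 : ℝ) 1)) :
    1 - (1 - α / (2 * ∑ i ∈ Finset.Icc 1 s, (1 : ℝ) / i)) ^ (s / 2 + 1) ≤
      (μ {ω | 1 ≤ (rejectedSet
          (fun j => α / (∑ i ∈ Finset.Icc 1 s, (1 : ℝ) / i) * ((j : ℝ) / s))
          (fun i => p i ω) ∩ I).card}).toReal ∧
    Filter.Tendsto
      (fun n : ℕ => 1 - (1 - α / (2 * ∑ i ∈ Finset.Icc 1 n, (1 : ℝ) / i)) ^ (n / 2 + 1))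
      Filter.atTop (nhds 1) :=
  stmt11_general μ hs α hα p hmeas I hIcard hfalse hindep hunif
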